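/- Let X be a complex Banach space and Δ : S(c₀(Γ)) → S(X) a surjective isometry. Then for n ≠ m in Γ, the elements Δ(e_n) and Δ(e_m) are completely M-orthogonal: ‖αΔ(e_n) + βΔ(e_m)‖ = max{|α|, |β|} for all α, β ∈ ℂ. -/

import Mathlib

open ZeroAtInfty Metric

/-- The canonical basis vector `e n` of `c₀(Γ)`. -/
noncomputable def stdBasis {Γ : Type*} [TopologicalSpace Γ] [DiscreteTopology Γ] [DecidableEq Γ]
    (n : Γ) : C₀(Γ, ℂ) where
  toFun := fun k => if k = n then 1 else 0
  continuous_toFun := continuous_of_discreteTopology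
  zero_at_infty' := by
    have h : (fun k => if k = n then (1 : ℂ) else 0) =ᶠ[Filter.cocompact Γ] 0 := by
      refine Filter.mem_cocompact.2 ⟨{n}, isCompact_singleton, ?_⟩
      intro k hk
      simp only [Set.mem_compl_iff, Set.mem_singleton_iff] at hk
      simp [hk]
    exact Filter.Tendsto.congr' h.symm tendsto_const_nhds

/-!
The points `c • eₙ` (`‖c‖ = 1`) of the unit sphere of `c₀(Γ)` admit a purely metric description
(`IsVertex`), so `Δ` and every rotation `p ↦ η • p` of the unit sphere of `X` preserve it. The map
`η ↦ Δ⁻¹ (η • Δ eₙ)` is then a continuous map from the connected unit circle into these points;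
since points on different axes are at distance `1`, it never leaves the axis of `eₙ`. Hence
`Δ⁻¹ (λ • Δ eₙ)` and `Δ⁻¹ (-μ • Δ eₘ)` lie on different axes, which gives
`‖λ • Δ eₙ + μ • Δ eₘ‖ = 1` for unimodular `λ, μ`. Writing a coefficient of modulus at most `1`
as the average of two unimodular ones extends this to all coefficients.
-/

open Function MulAction

namespace ZeroAtInftyContinuousMap

variable {α E : Type*} [TopologicalSpace α] [NormedAddCommGroup E]

theorem norm_apply_le (f : C₀(α, E)) (x : α) : ‖f x‖ ≤ ‖f‖ := by
  rw [← norm_toBCF_eq_norm]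
  exact f.toBCF.norm_coe_le_norm x

theorem norm_le_iff (f : C₀(α, E)) {C : ℝ} (hC : 0 ≤ C) : ‖f‖ ≤ C ↔ ∀ x, ‖f x‖ ≤ C := by
  rw [← norm_toBCF_eq_norm]
  exact f.toBCF.norm_le hC

theorem exists_norm_apply_eq (f : C₀(α, E)) (hf : f ≠ 0) : ∃ x, ‖f x‖ = ‖f‖ := by
  obtain ⟨x₀, hx₀⟩ := DFunLike.ne_iff.1 hf
  have hpos : 0 < ‖f x₀‖ := norm_pos_iff.2 hx₀
  have hsmall : ∀ᶠ x in Filter.cocompact α, ‖f x‖ ≤ ‖f x₀‖ := by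
    have := (zero_at_infty f).norm
    rw [norm_zero] at this
    exact (this.eventually (gt_mem_nhds hpos)).mono fun _ h => h.le
  obtain ⟨x, hx⟩ := (map_continuous f).norm.exists_forall_ge' x₀ hsmall
  exact ⟨x, le_antisymm (f.norm_apply_le x) ((f.norm_le_iff (norm_nonneg _)).2 hx)⟩

end ZeroAtInftyContinuousMap

theorem norm_eq_one_and_eq_neg_of_norm_sub_eq_two {E : Type*} [NormedAddCommGroup E]
    [NormedSpace ℝ E] [StrictConvexSpace ℝ E] {x y : E} (hx : ‖x‖ ≤ 1) (hy : ‖y‖ ≤ 1)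
    (h : ‖y - x‖ = 2) : ‖x‖ = 1 ∧ y = -x := by
  have hx1 : ‖x‖ = 1 := by linarith [norm_sub_le y x]
  have hy1 : ‖y‖ = 1 := by linarith [norm_sub_le y x]
  refine ⟨hx1, eq_of_norm_eq_of_norm_add_eq ?_ ?_⟩
  · rw [norm_neg, hx1, hy1]
  · rw [← sub_eq_add_neg, h, norm_neg, hx1, hy1]
    norm_num

theorem Complex.exists_norm_eq_one_add_eq_two_mul (c : ℂ) (hc : ‖c‖ ≤ 1) :
    ∃ θ₁ θ₂ : ℂ, ‖θ₁‖ = 1 ∧ ‖θ₂‖ = 1 ∧ θ₁ + θ₂ = 2 * c := by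
  set τ := exp (c.arg * I)
  set s := √(1 - ‖c‖ ^ 2)
  have hs : ‖c‖ ^ 2 + s ^ 2 = 1 := by
    rw [Real.sq_sqrt (by nlinarith [norm_nonneg c])]; ring
  have hnorm : ∀ t : ℝ, ‖c‖ ^ 2 + t ^ 2 = 1 → ‖τ * (‖c‖ + t * I)‖ = 1 := fun t ht => by
    rw [norm_mul, norm_exp_ofReal_mul_I, one_mul, norm_def, normSq_add_mul_I, ht, Real.sqrt_one]
  refine ⟨τ * (‖c‖ + s * I), τ * (‖c‖ + (-s : ℝ) * I), hnorm s hs, hnorm (-s) (by rwa [neg_sq]), ?_⟩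
  push_cast
  linear_combination 2 * norm_mul_exp_arg_mul_I c

section UnimodularCoefficients

variable {E : Type*} [NormedAddCommGroup E] [NormedSpace ℂ E] {u v : E}

theorem norm_add_smul_eq_one (hu : ‖u‖ = 1) (h : ∀ θ : ℂ, ‖θ‖ = 1 → ‖u + θ • v‖ = 1)
    {c : ℂ} (hc : ‖c‖ ≤ 1) : ‖u + c • v‖ = 1 := by
  have upper : ∀ c : ℂ, ‖c‖ ≤ 1 → ‖u + c • v‖ ≤ 1 := by
    intro c hc
    obtain ⟨θ₁, θ₂, h₁, h₂, hθ⟩ := Complex.exists_norm_eq_one_add_eq_two_mul c hc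
    have hsum : (2 : ℂ) • (u + c • v) = (u + θ₁ • v) + (u + θ₂ • v) := by
      rw [smul_add, smul_smul, ← hθ, add_smul, two_smul]; abel
    have := norm_add_le (u + θ₁ • v) (u + θ₂ • v)
    rw [← hsum, norm_smul, h θ₁ h₁, h θ₂ h₂, Complex.norm_two] at this
    linarith
  have hneg := upper (-c) (by rwa [norm_neg])
  have hsum : (u + c • v) + (u + (-c) • v) = (2 : ℂ) • u := by
    rw [neg_smul, two_smul]; abel
  have := norm_add_le (u + c • v) (u + (-c) • v)
  rw [hsum, norm_smul, hu, Complex.norm_two] at this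
  linarith [upper c hc]

theorem norm_smul_add_smul_eq_of_norm_le (hu : ‖u‖ = 1)
    (h : ∀ θ : ℂ, ‖θ‖ = 1 → ‖u + θ • v‖ = 1) {α β : ℂ} (hαβ : ‖β‖ ≤ ‖α‖) :
    ‖α • u + β • v‖ = ‖α‖ := by
  rcases eq_or_ne α 0 with rfl | hα
  · obtain rfl : β = 0 := norm_le_zero_iff.1 (by simpa using hαβ)
    simp
  have hβα : ‖β / α‖ ≤ 1 := by
    rw [norm_div, div_le_one (norm_pos_iff.2 hα)]; exact hαβ
  calc ‖α • u + β • v‖ = ‖α • (u + (β / α) • v)‖ := by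
        rw [smul_add, smul_smul, mul_div_cancel₀ _ hα]
    _ = ‖α‖ := by rw [norm_smul, norm_add_smul_eq_one hu h hβα, mul_one]

theorem norm_smul_add_smul_eq_max (hu : ‖u‖ = 1) (hv : ‖v‖ = 1)
    (h : ∀ c d : ℂ, ‖c‖ = 1 → ‖d‖ = 1 → ‖c • u + d • v‖ = 1) (α β : ℂ) :
    ‖α • u + β • v‖ = max ‖α‖ ‖β‖ := by
  rcases le_total ‖β‖ ‖α‖ with hαβ | hβα
  · rw [max_eq_left hαβ]
    exact norm_smul_add_smul_eq_of_norm_le hu (fun θ hθ => by simpa using h 1 θ (by simp) hθ) hαβ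
  · rw [max_eq_right hβα, add_comm]
    exact norm_smul_add_smul_eq_of_norm_le hv (fun θ hθ => by
      simpa [add_comm] using h θ 1 hθ (by simp)) hβα

end UnimodularCoefficients

section Vertex

variable {α β : Type*} [PseudoMetricSpace α] [PseudoMetricSpace β]

def antipodalSet (a : α) : Set α := {z | dist z a = 2}

-- On the unit sphere of `C₀(Γ, ℂ)` these are exactly the points `c • eₙ` with `‖c‖ = 1`
-- (`isVertex_iff_exists_mem_orbit`).
def IsVertex (a : α) : Prop :=
  (∀ w, antipodalSet w ⊆ antipodalSet a → antipodalSet w = antipodalSet a) ∧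
    ∀ w, antipodalSet w = antipodalSet a → dist a w ≤ 1

theorem Isometry.preimage_antipodalSet {Θ : α → β} (hΘ : Isometry Θ) (a : α) :
    Θ ⁻¹' antipodalSet (Θ a) = antipodalSet a := by
  ext z
  simp [antipodalSet, hΘ.dist_eq]

theorem Isometry.isVertex_apply_iff {Θ : α → β} (hΘ : Isometry Θ) (hs : Surjective Θ) {a : α} :
    IsVertex (Θ a) ↔ IsVertex a := by
  simp only [IsVertex, hs.forall, ← hs.preimage_subset_preimage_iff,
    ← hs.preimage_injective.eq_iff, hΘ.preimage_antipodalSet, hΘ.dist_eq]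

end Vertex

section SphereAction

variable {𝕜 E : Type*} [NormedField 𝕜] [SeminormedAddCommGroup E] [NormedSpace 𝕜 E]

@[simp]
theorem coe_smul_sphere {r : ℝ} (c : sphere (0 : 𝕜) 1) (p : sphere (0 : E) r) :
    ((c • p : sphere (0 : E) r) : E) = (c : 𝕜) • (p : E) :=
  rfl

theorem isometry_smul_sphere {r : ℝ} (c : sphere (0 : 𝕜) 1) :
    Isometry fun p : sphere (0 : E) r => c • p := by
  refine Isometry.of_dist_eq fun p q => ?_
  rw [Subtype.dist_eq, Subtype.dist_eq, dist_eq_norm, dist_eq_norm, coe_smul_sphere,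
    coe_smul_sphere, ← smul_sub, norm_smul, norm_eq_of_mem_sphere c, one_mul]

end SphereAction

section ZeroAtInftySphere

variable {α E : Type*} [TopologicalSpace α] [NormedAddCommGroup E]

theorem norm_apply_le_one (a : sphere (0 : C₀(α, E)) 1) (k : α) : ‖(a : C₀(α, E)) k‖ ≤ 1 :=
  ((a : C₀(α, E)).norm_apply_le k).trans_eq (norm_eq_of_mem_sphere a)

variable [NormedSpace ℝ E] [StrictConvexSpace ℝ E]

theorem mem_antipodalSet_iff {a z : sphere (0 : C₀(α, E)) 1} :
    z ∈ antipodalSet a ↔ ∃ k, ‖(a : C₀(α, E)) k‖ = 1 ∧ (z : C₀(α, E)) k = -(a : C₀(α, E)) k := by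
  rw [antipodalSet, Set.mem_ofPred_eq, Subtype.dist_eq, dist_eq_norm]
  constructor
  · intro h
    obtain ⟨k, hk⟩ := ((z : C₀(α, E)) - a).exists_norm_apply_eq (fun h0 => by simp [h0] at h)
    rw [h, ZeroAtInftyContinuousMap.sub_apply] at hk
    exact ⟨k, norm_eq_one_and_eq_neg_of_norm_sub_eq_two (norm_apply_le_one a k)
      (norm_apply_le_one z k) hk⟩
  · rintro ⟨k, hak, hzk⟩
    refine le_antisymm ?_ ?_
    · calc _ ≤ ‖(z : C₀(α, E))‖ + ‖(a : C₀(α, E))‖ := norm_sub_le _ _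
        _ = 2 := by rw [norm_eq_of_mem_sphere, norm_eq_of_mem_sphere]; norm_num
    · calc (2 : ℝ) = ‖(z : C₀(α, E)) k - (a : C₀(α, E)) k‖ := by
            rw [hzk, ← neg_add', norm_neg, ← two_smul ℝ, norm_smul, hak]; norm_num
        _ ≤ _ := ((z : C₀(α, E)) - a).norm_apply_le k

theorem antipodalSet_eq_of_forall_eq {a w : sphere (0 : C₀(α, E)) 1}
    (h : ∀ k, ‖(a : C₀(α, E)) k‖ = 1 ∨ ‖(w : C₀(α, E)) k‖ = 1 →
      (w : C₀(α, E)) k = (a : C₀(α, E)) k) :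
    antipodalSet w = antipodalSet a := by
  ext z
  simp only [mem_antipodalSet_iff]
  constructor
  · rintro ⟨k, hk, hz⟩
    have e := h k (Or.inr hk)
    rw [e] at hk hz
    exact ⟨k, hk, hz⟩
  · rintro ⟨k, hk, hz⟩
    have e := h k (Or.inl hk)
    rw [← e] at hk hz
    exact ⟨k, hk, hz⟩

end ZeroAtInftySphere

section StdBasis

variable {Γ : Type*} [TopologicalSpace Γ] [DiscreteTopology Γ] [DecidableEq Γ]

@[simp]
theorem stdBasis_apply (n k : Γ) : stdBasis n k = if k = n then 1 else 0 := rfl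

theorem norm_smul_stdBasis (c : ℂ) (n : Γ) : ‖c • stdBasis n‖ = ‖c‖ := by
  refine le_antisymm (((c • stdBasis n).norm_le_iff (norm_nonneg c)).2 fun k => ?_) ?_
  · by_cases h : k = n <;> simp [h]
  · simpa using (c • stdBasis n).norm_apply_le n

noncomputable def stdBasisSphere (n : Γ) : sphere (0 : C₀(Γ, ℂ)) 1 :=
  ⟨stdBasis n, by simpa using norm_smul_stdBasis 1 n⟩

@[simp]
theorem coe_stdBasisSphere (n : Γ) : (stdBasisSphere n : C₀(Γ, ℂ)) = stdBasis n :=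
  rfl

theorem smul_stdBasisSphere_apply (c : sphere (0 : ℂ) 1) (n k : Γ) :
    ((c • stdBasisSphere n : sphere (0 : C₀(Γ, ℂ)) 1) : C₀(Γ, ℂ)) k =
      if k = n then (c : ℂ) else 0 := by
  simp

theorem smul_stdBasisSphere_mem_antipodalSet_iff {c : sphere (0 : ℂ) 1} {k : Γ}
    {w : sphere (0 : C₀(Γ, ℂ)) 1} :
    c • stdBasisSphere k ∈ antipodalSet w ↔ (w : C₀(Γ, ℂ)) k = -c := by
  rw [mem_antipodalSet_iff]
  constructor
  · rintro ⟨j, hj, hz⟩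
    rw [smul_stdBasisSphere_apply] at hz
    by_cases hjk : j = k
    · rw [if_pos hjk] at hz
      rw [← hjk, hz, neg_neg]
    · rw [if_neg hjk, zero_eq_neg] at hz
      rw [hz, norm_zero] at hj
      exact absurd hj zero_ne_one
  · intro h
    exact ⟨k, by simp [h], by simp [h]⟩

theorem apply_eq_of_antipodalSet_subset {a b : sphere (0 : C₀(Γ, ℂ)) 1}
    (h : antipodalSet a ⊆ antipodalSet b) {k : Γ} (hk : ‖(a : C₀(Γ, ℂ)) k‖ = 1) :
    (b : C₀(Γ, ℂ)) k = (a : C₀(Γ, ℂ)) k := by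
  let θ : sphere (0 : ℂ) 1 := ⟨-(a : C₀(Γ, ℂ)) k, by simpa using hk⟩
  have hθ := h (smul_stdBasisSphere_mem_antipodalSet_iff.2 (neg_neg _).symm :
    θ • stdBasisSphere k ∈ antipodalSet a)
  rw [smul_stdBasisSphere_mem_antipodalSet_iff] at hθ
  simpa [θ] using hθ

theorem isVertex_smul_stdBasisSphere (c : sphere (0 : ℂ) 1) (n : Γ) :
    IsVertex (c • stdBasisSphere n) := by
  set p := c • stdBasisSphere n
  have hcoord : ∀ k, (p : C₀(Γ, ℂ)) k = if k = n then (c : ℂ) else 0 :=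
    smul_stdBasisSphere_apply c n
  constructor
  · intro w hw
    have hpeak : ∀ k, ‖(w : C₀(Γ, ℂ)) k‖ = 1 → k = n ∧ (w : C₀(Γ, ℂ)) k = c := by
      intro k hk
      have hθ := apply_eq_of_antipodalSet_subset hw hk
      rw [hcoord] at hθ
      by_cases hkn : k = n
      · rw [if_pos hkn] at hθ
        exact ⟨hkn, hθ.symm⟩
      · rw [if_neg hkn] at hθ
        rw [← hθ, norm_zero] at hk
        exact absurd hk zero_ne_one
    obtain ⟨k₀, hk₀⟩ := (w : C₀(Γ, ℂ)).exists_norm_apply_eq (ne_zero_of_mem_unit_sphere w)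
    obtain ⟨rfl, hwn⟩ := hpeak k₀ (hk₀.trans (norm_eq_of_mem_sphere w))
    refine antipodalSet_eq_of_forall_eq fun k hk => ?_
    rcases hk with hk | hk
    · by_cases hkn : k = k₀
      · rw [hkn, hwn, hcoord, if_pos rfl]
      · simp [hcoord, hkn] at hk
    · obtain ⟨rfl, hwk⟩ := hpeak k hk
      rw [hwk, hcoord, if_pos rfl]
  · intro w hw
    have hwn : (w : C₀(Γ, ℂ)) n = c := by
      rw [apply_eq_of_antipodalSet_subset hw.ge (by simp [hcoord]), hcoord, if_pos rfl]
    rw [Subtype.dist_eq, dist_eq_norm, ZeroAtInftyContinuousMap.norm_le_iff _ zero_le_one]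
    intro k
    by_cases hkn : k = n
    · simp [hcoord, hkn, hwn]
    · simpa [hcoord, hkn] using norm_apply_le_one w k

-- With `r = ‖a j‖`, push the `j`-th coordinate through `0` to modulus `1 - r / 2`: the peaks
-- of `a` are unchanged, but the point moves by `1 + r / 2`.
theorem exists_dist_gt_one_of_norm_apply_lt_one {a : sphere (0 : C₀(Γ, ℂ)) 1} {j : Γ}
    (h0 : (a : C₀(Γ, ℂ)) j ≠ 0) (h1 : ‖(a : C₀(Γ, ℂ)) j‖ < 1) :
    ∃ w : sphere (0 : C₀(Γ, ℂ)) 1, antipodalSet w = antipodalSet a ∧ 1 < dist a w := by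
  set r := ‖(a : C₀(Γ, ℂ)) j‖
  have hr : 0 < r := norm_pos_iff.2 h0
  set t : ℂ := (a : C₀(Γ, ℂ)) j * ((1 / r + 1 / 2 : ℝ) : ℂ)
  set w : C₀(Γ, ℂ) := a - t • stdBasis j
  have hw : ∀ k, w k = if k = j then (a : C₀(Γ, ℂ)) j * ((1 / 2 - 1 / r : ℝ) : ℂ)
      else (a : C₀(Γ, ℂ)) k := by
    intro k
    by_cases hk : k = j
    · subst hk
      simp only [w, t, ZeroAtInftyContinuousMap.sub_apply, ZeroAtInftyContinuousMap.smul_apply,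
        stdBasis_apply, if_pos, smul_eq_mul]
      push_cast
      ring
    · simp [w, hk]
  have hwj : ‖w j‖ = 1 - r / 2 := by
    have hneg : 1 / 2 - 1 / r < 0 := by
      rw [sub_neg, one_div_lt_one_div (by norm_num) hr]; linarith
    rw [hw, if_pos rfl, norm_mul, Complex.norm_real, Real.norm_eq_abs, abs_of_neg hneg]
    field_simp
    ring
  obtain ⟨k₀, hk₀⟩ := (a : C₀(Γ, ℂ)).exists_norm_apply_eq (ne_zero_of_mem_unit_sphere a)
  rw [norm_eq_of_mem_sphere] at hk₀
  have hk₀j : k₀ ≠ j := by rintro rfl; linarith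
  have hw1 : w ∈ sphere (0 : C₀(Γ, ℂ)) 1 := by
    rw [mem_sphere_zero_iff_norm]
    refine le_antisymm ((w.norm_le_iff zero_le_one).2 fun k => ?_) ?_
    · by_cases hk : k = j
      · rw [hk, hwj]
        linarith
      · rw [hw, if_neg hk]
        exact norm_apply_le_one a k
    · calc (1 : ℝ) = ‖w k₀‖ := by rw [hw, if_neg hk₀j, hk₀]
        _ ≤ ‖w‖ := w.norm_apply_le k₀
  refine ⟨⟨w, hw1⟩, antipodalSet_eq_of_forall_eq fun k hk => ?_, ?_⟩
  · by_cases hkj : k = j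
    · subst hkj
      rcases hk with hk | hk
      · linarith
      · change ‖w k‖ = 1 at hk
        linarith
    · change w k = _
      rw [hw, if_neg hkj]
  · rw [Subtype.dist_eq, dist_eq_norm]
    change 1 < ‖(a : C₀(Γ, ℂ)) - w‖
    rw [show (a : C₀(Γ, ℂ)) - w = t • stdBasis j by simp [w], norm_smul_stdBasis, norm_mul,
      Complex.norm_real, Real.norm_eq_abs, abs_of_pos (by positivity), mul_add,
      mul_one_div_cancel hr.ne']
    linarith

theorem exists_mem_orbit_of_isVertex {a : sphere (0 : C₀(Γ, ℂ)) 1} (ha : IsVertex a) :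
    ∃ n, a ∈ orbit (sphere (0 : ℂ) 1) (stdBasisSphere n) := by
  obtain ⟨n, hn⟩ := (a : C₀(Γ, ℂ)).exists_norm_apply_eq (ne_zero_of_mem_unit_sphere a)
  rw [norm_eq_of_mem_sphere] at hn
  let c : sphere (0 : ℂ) 1 := ⟨(a : C₀(Γ, ℂ)) n, by simpa using hn⟩
  have hcoord := smul_stdBasisSphere_apply c n
  have hap : antipodalSet (c • stdBasisSphere n) = antipodalSet a := ha.1 _ fun z hz => by
    rw [mem_antipodalSet_iff] at hz ⊢
    obtain ⟨k, hk, hzk⟩ := hz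
    rw [hcoord] at hk hzk
    by_cases hkn : k = n
    · rw [if_pos hkn] at hzk
      exact ⟨k, hkn ▸ hn, hkn ▸ hzk⟩
    · rw [if_neg hkn, norm_zero] at hk
      exact absurd hk zero_ne_one
  have hlt : ∀ j ≠ n, ‖(a : C₀(Γ, ℂ)) j‖ < 1 := by
    intro j hj
    refine (norm_apply_le_one a j).lt_of_ne fun h1 => ?_
    have hθ := apply_eq_of_antipodalSet_subset hap.ge h1
    rw [hcoord, if_neg hj] at hθ
    rw [← hθ, norm_zero] at h1
    exact zero_ne_one h1
  have hzero : ∀ j ≠ n, (a : C₀(Γ, ℂ)) j = 0 := by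
    intro j hj
    by_contra h0
    obtain ⟨w, hw, hdist⟩ := exists_dist_gt_one_of_norm_apply_lt_one h0 (hlt j hj)
    exact (ha.2 w hw).not_gt hdist
  refine ⟨n, c, Subtype.ext (ZeroAtInftyContinuousMap.ext fun k => ?_)⟩
  rw [hcoord]
  split_ifs with hk
  · rw [hk]
  · exact (hzero k hk).symm

theorem isVertex_iff_exists_mem_orbit {a : sphere (0 : C₀(Γ, ℂ)) 1} :
    IsVertex a ↔ ∃ n, a ∈ orbit (sphere (0 : ℂ) 1) (stdBasisSphere n) :=
  ⟨exists_mem_orbit_of_isVertex, fun ⟨n, c, hc⟩ => hc ▸ isVertex_smul_stdBasisSphere c n⟩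

theorem dist_smul_stdBasisSphere_of_ne {n m : Γ} (hnm : n ≠ m) (c d : sphere (0 : ℂ) 1) :
    dist (c • stdBasisSphere n) (d • stdBasisSphere m) = 1 := by
  rw [Subtype.dist_eq, dist_eq_norm]
  refine le_antisymm ((ZeroAtInftyContinuousMap.norm_le_iff _ zero_le_one).2 fun k => ?_) ?_
  · by_cases hkn : k = n
    · simp [hkn, hnm]
    · by_cases hkm : k = m <;> simp [hkn, hkm, hnm.symm]
  · simpa [hnm] using ZeroAtInftyContinuousMap.norm_apply_le
      ((c • stdBasisSphere n : sphere (0 : C₀(Γ, ℂ)) 1) - (d • stdBasisSphere m :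
        sphere (0 : C₀(Γ, ℂ)) 1) : C₀(Γ, ℂ)) n

theorem eq_of_mem_orbit_of_dist_lt_one {n m : Γ} {a b : sphere (0 : C₀(Γ, ℂ)) 1}
    (ha : a ∈ orbit (sphere (0 : ℂ) 1) (stdBasisSphere n))
    (hb : b ∈ orbit (sphere (0 : ℂ) 1) (stdBasisSphere m)) (hab : dist a b < 1) : n = m := by
  obtain ⟨c, rfl⟩ := ha
  obtain ⟨d, rfl⟩ := hb
  by_contra hnm
  exact hab.ne' (dist_smul_stdBasisSphere_of_ne hnm c d).symm

theorem isLocallyConstant_mem_orbit {T : Type*} [TopologicalSpace T]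
    {f : T → sphere (0 : C₀(Γ, ℂ)) 1} (hf : Continuous f) (hv : ∀ t, IsVertex (f t)) (n : Γ) :
    IsLocallyConstant fun t => f t ∈ orbit (sphere (0 : ℂ) 1) (stdBasisSphere n) := by
  have hunique : ∀ {k a}, a ∈ orbit (sphere (0 : ℂ) 1) (stdBasisSphere k) →
      (a ∈ orbit (sphere (0 : ℂ) 1) (stdBasisSphere n) ↔ n = k) := fun ha =>
    ⟨fun h => eq_of_mem_orbit_of_dist_lt_one h ha (by simp), by rintro rfl; exact ha⟩
  refine (IsLocallyConstant.iff_eventually_eq _).2 fun t => ?_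
  obtain ⟨k, hk⟩ := exists_mem_orbit_of_isVertex (hv t)
  filter_upwards [(hf.tendsto t).eventually (ball_mem_nhds _ one_pos)] with s hs
  obtain ⟨k', hk'⟩ := exists_mem_orbit_of_isVertex (hv s)
  obtain rfl := eq_of_mem_orbit_of_dist_lt_one hk' hk hs
  exact propext ((hunique hk').trans (hunique hk).symm)

end StdBasis

instance : PreconnectedSpace (sphere (0 : ℂ) 1) :=
  isPreconnected_iff_preconnectedSpace.1 <|
    isPreconnected_sphere (by rw [Complex.rank_real_complex]; norm_num) 0 1

theorem mem_orbit_of_apply_eq_smul {Γ : Type*} [TopologicalSpace Γ] [DiscreteTopology Γ]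
    [DecidableEq Γ] {X : Type*} [NormedAddCommGroup X] [NormedSpace ℂ X]
    {Δ : sphere (0 : C₀(Γ, ℂ)) 1 → sphere (0 : X) 1} (hΔ : Isometry Δ) (hs : Surjective Δ)
    {n : Γ} {x a : sphere (0 : C₀(Γ, ℂ)) 1}
    (hx : x ∈ orbit (sphere (0 : ℂ) 1) (stdBasisSphere n)) {c : sphere (0 : ℂ) 1}
    (ha : Δ a = c • Δ x) : a ∈ orbit (sphere (0 : ℂ) 1) (stdBasisSphere n) := by
  let f := fun η : sphere (0 : ℂ) 1 => surjInv hs (η • Δ x)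
  have hfΔ : ∀ η, Δ (f η) = η • Δ x := fun η => surjInv_eq hs _
  have hf : Continuous f :=
    (hΔ.right_inv (rightInverse_surjInv hs)).continuous.comp (continuous_id.smul continuous_const)
  have hv : ∀ η, IsVertex (f η) := fun η => by
    rw [← hΔ.isVertex_apply_iff hs, hfΔ,
      (isometry_smul_sphere η).isVertex_apply_iff (MulAction.surjective η),
      hΔ.isVertex_apply_iff hs]
    exact isVertex_iff_exists_mem_orbit.2 ⟨n, hx⟩
  have h1 : f 1 = x := hΔ.injective (by rw [hfΔ, one_smul])
  have hc : f c = a := hΔ.injective (by rw [hfΔ, ha])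
  rw [← hc]
  rw [← h1] at hx
  exact ((isLocallyConstant_mem_orbit hf hv n).apply_eq_of_preconnectedSpace c 1).to_iff.2 hx

theorem images_completely_M_orthogonal_general {Γ : Type*} [TopologicalSpace Γ] [DiscreteTopology Γ]
    [DecidableEq Γ]
    {X : Type*} [NormedAddCommGroup X] [NormedSpace ℂ X]
    (Δ : sphere (0 : C₀(Γ, ℂ)) 1 → sphere (0 : X) 1)
    (hΔiso : Isometry Δ) (hΔsurj : Function.Surjective Δ)
    (n m : Γ) (hnm : n ≠ m)
    (x y : sphere (0 : C₀(Γ, ℂ)) 1)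
    (hx : (x : C₀(Γ, ℂ)) = stdBasis n) (hy : (y : C₀(Γ, ℂ)) = stdBasis m) :
    ∀ α β : ℂ, ‖α • (Δ x : X) + β • (Δ y : X)‖ = max ‖α‖ ‖β‖ := by
  have hxn : x ∈ orbit (sphere (0 : ℂ) 1) (stdBasisSphere n) :=
    ⟨1, Subtype.ext (by simp [hx])⟩
  have hym : y ∈ orbit (sphere (0 : ℂ) 1) (stdBasisSphere m) :=
    ⟨1, Subtype.ext (by simp [hy])⟩
  refine norm_smul_add_smul_eq_max (norm_eq_of_mem_sphere _) (norm_eq_of_mem_sphere _)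
    fun c d hc hd => ?_
  let c' : sphere (0 : ℂ) 1 := ⟨c, mem_sphere_zero_iff_norm.2 hc⟩
  let d' : sphere (0 : ℂ) 1 := ⟨-d, by simpa using hd⟩
  obtain ⟨a, ha⟩ := hΔsurj (c' • Δ x)
  obtain ⟨b, hb⟩ := hΔsurj (d' • Δ y)
  obtain ⟨θ, rfl⟩ := mem_orbit_iff.1 (mem_orbit_of_apply_eq_smul hΔiso hΔsurj hxn ha)
  obtain ⟨φ, rfl⟩ := mem_orbit_iff.1 (mem_orbit_of_apply_eq_smul hΔiso hΔsurj hym hb)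
  have h := dist_smul_stdBasisSphere_of_ne hnm θ φ
  rw [← hΔiso.dist_eq, ha, hb, Subtype.dist_eq, dist_eq_norm] at h
  simpa [c', d'] using h

/-- The images `Δ(eₙ)` and `Δ(eₘ)`, `n ≠ m`, are completely `M`-orthogonal. -/
theorem images_completely_M_orthogonal {Γ : Type*} [TopologicalSpace Γ] [DiscreteTopology Γ]
    [DecidableEq Γ] [Infinite Γ]
    {X : Type*} [NormedAddCommGroup X] [NormedSpace ℂ X] [CompleteSpace X]
    (Δ : sphere (0 : C₀(Γ, ℂ)) 1 → sphere (0 : X) 1)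
    (hΔiso : Isometry Δ) (hΔsurj : Function.Surjective Δ)
    (n m : Γ) (hnm : n ≠ m)
    (x y : sphere (0 : C₀(Γ, ℂ)) 1)
    (hx : (x : C₀(Γ, ℂ)) = stdBasis n) (hy : (y : C₀(Γ, ℂ)) = stdBasis m) :
    ∀ α β : ℂ, ‖α • (Δ x : X) + β • (Δ y : X)‖ = max ‖α‖ ‖β‖ :=
  images_completely_M_orthogonal_general Δ hΔiso hΔsurj n m hnm x y hx hy
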